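/- Let m ≥ 2 and let Γ be a subgroup of Perm(Fin m) acting transitively on Fin m. Let a : Fin m → ℕ with a(i) ≥ 2 for all i. Suppose N ∈ ℕ is such that every m-edge-colouring of the complete graph on N vertices contains, for some i ∈ Fin m, a monochromatic K_{a(i)−1} of colour i. Then every m-edge-colouring of the complete graph on N+1 vertices is Γ-switch equivalent to a colouring containing, for some i ∈ Fin m, a monochromatic K_{a(i)} of colour i. -/

import Mathlib

open scoped Classical in
/-- Switch the edge-colouring `c` at vertex `v` with permutation `π`: every edge
incident with `v` has its colour replaced by its image under `π`. -/
noncomputable def switchAt {V K : Type*} (c : Sym2 V → K) (π : Equiv.Perm K) (v : V) :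
    Sym2 V → K :=
  fun s => if v ∈ s then π (c s) else c s

/-- Two colourings are `Γ`-switch equivalent if one is obtained from the other by a
finite sequence of switches at vertices with permutations from `Γ`. -/
def SwitchEquiv {V K : Type*} (Γ : Subgroup (Equiv.Perm K)) (c c' : Sym2 V → K) : Prop :=
  Relation.ReflTransGen (fun d d' => ∃ π ∈ Γ, ∃ v : V, d' = switchAt d π v) c c'

/-- The colouring `c` contains a monochromatic complete graph on `t` vertices of colour `i`. -/
def HasMonoK {V K : Type*} (c : Sym2 V → K) (i : K) (t : ℕ) : Prop :=
  ∃ S : Finset V, S.card = t ∧ ∀ x ∈ S, ∀ y ∈ S, x ≠ y → c s(x, y) = i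


/-!
Fix a vertex `w` and a colour `z`. Switching at every other vertex `v` with a permutation from
`Γ` sending the colour of `vw` to `z` makes all edges at `w` of colour `z`, since each such switch
touches only one edge at `w`. By hypothesis the remaining `N` vertices then span a monochromatic
`K_{a i - 1}` of some colour `i`; a final switch at `w` with a permutation sending `z` to `i`
leaves those edges alone and recolours every edge at `w` by `i`, so `w` extends it to a `K_{a i}`.
-/

open Finset

section Switching

variable {V K : Type*}

theorem switchAt_of_mem {c : Sym2 V → K} {π : Equiv.Perm K} {v : V} {s : Sym2 V} (h : v ∈ s) :
    switchAt c π v s = π (c s) := by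
  classical
  simp [switchAt, h]

theorem switchAt_of_notMem {c : Sym2 V → K} {π : Equiv.Perm K} {v : V} {s : Sym2 V}
    (h : v ∉ s) : switchAt c π v s = c s := by
  classical
  simp [switchAt, h]

theorem switchAt_comp_map_of_forall_ne {W : Type*} {c : Sym2 V → K} {π : Equiv.Perm K}
    {v : V} {f : W → V} (hf : ∀ x, f x ≠ v) : switchAt c π v ∘ Sym2.map f = c ∘ Sym2.map f := by
  ext e
  induction e using Sym2.ind with
  | _ x y => simpa using switchAt_of_notMem (by simp [Sym2.mem_iff, (hf x).symm, (hf y).symm])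

theorem SwitchEquiv.switchAt {Γ : Subgroup (Equiv.Perm K)} {c d : Sym2 V → K}
    (h : SwitchEquiv Γ c d) {π : Equiv.Perm K} (hπ : π ∈ Γ) (v : V) :
    SwitchEquiv Γ c (switchAt d π v) :=
  Relation.ReflTransGen.tail h ⟨π, hπ, v, rfl⟩

theorem exists_switchEquiv_forall_mem_eq {Γ : Subgroup (Equiv.Perm K)} {z : K}
    (hz : ∀ k, ∃ π ∈ Γ, π k = z) (c : Sym2 V → K) {w : V} {s : Finset V} (hw : w ∉ s) :
    ∃ c', SwitchEquiv Γ c c' ∧ ∀ v ∈ s, c' s(v, w) = z := by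
  classical
  induction s using Finset.induction_on with
  | empty => exact ⟨c, .refl, by simp⟩
  | insert u s hu ih =>
    obtain ⟨huw, hws⟩ : u ≠ w ∧ w ∉ s := by
      simpa [eq_comm] using hw
    obtain ⟨c', hcc', hc'⟩ := ih hws
    obtain ⟨π, hπ, hπz⟩ := hz (c' s(u, w))
    refine ⟨switchAt c' π u, hcc'.switchAt hπ u, ?_⟩
    intro v hv
    rcases mem_insert.mp hv with rfl | hvs
    · rw [switchAt_of_mem (Sym2.mem_mk_left _ _), hπz]
    · have hvu : v ≠ u := fun h => hu (h ▸ hvs)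
      rw [switchAt_of_notMem (by simp [Sym2.mem_iff, hvu.symm, huw]), hc' v hvs]

theorem exists_switchEquiv_forall_ne_eq [Finite V] {Γ : Subgroup (Equiv.Perm K)} {z : K}
    (hz : ∀ k, ∃ π ∈ Γ, π k = z) (c : Sym2 V → K) (w : V) :
    ∃ c', SwitchEquiv Γ c c' ∧ ∀ v, v ≠ w → c' s(v, w) = z := by
  classical
  have := Fintype.ofFinite V
  simpa using exists_switchEquiv_forall_mem_eq hz c (notMem_erase w univ)

end Switching

theorem HasMonoK.insert_apex {W V K : Type*} {c : Sym2 V → K} {i : K} {t : ℕ} {f : W ↪ V}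
    {w : V} (hw : ∀ x, f x ≠ w) (hmono : HasMonoK (c ∘ Sym2.map f) i t)
    (hapex : ∀ x, c s(f x, w) = i) : HasMonoK c i (t + 1) := by
  classical
  obtain ⟨S, hcard, hS⟩ := hmono
  have hwS : w ∉ S.map f := by simp [hw]
  refine ⟨insert w (S.map f), by rw [card_insert_of_notMem hwS, card_map, hcard], ?_⟩
  simp only [mem_insert, mem_map]
  rintro x (rfl | ⟨x, hx, rfl⟩) y (rfl | ⟨y, hy, rfl⟩) hxy
  · exact absurd rfl hxy
  · rw [Sym2.eq_swap, hapex]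
  · exact hapex x
  · simpa using hS x hx y hy (fun h => hxy (h ▸ rfl))

/-- If `Γ` acts transitively on the colours, then
`R_Γ(a₁,…,a_m) ≤ R(a₁ - 1,…,a_m - 1) + 1`. -/
theorem stmt8 (m : ℕ) (hm : 2 ≤ m) (Γ : Subgroup (Equiv.Perm (Fin m)))
    (htrans : ∀ i j : Fin m, ∃ π ∈ Γ, π i = j)
    (a : Fin m → ℕ) (ha : ∀ i, 2 ≤ a i)
    (N : ℕ) (hN : ∀ c : Sym2 (Fin N) → Fin m, ∃ i : Fin m, HasMonoK c i (a i - 1))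
    (c : Sym2 (Fin (N + 1)) → Fin m) :
    ∃ c', SwitchEquiv Γ c c' ∧ ∃ i : Fin m, HasMonoK c' i (a i) := by
  let z : Fin m := ⟨0, by omega⟩
  obtain ⟨c₁, hcc₁, hc₁⟩ :=
    exists_switchEquiv_forall_ne_eq (fun k => htrans k z) c (Fin.last N)
  let f : Fin N ↪ Fin (N + 1) := Fin.castSuccEmb
  have hf : ∀ x, f x ≠ Fin.last N := fun x => (Fin.castSucc_lt_last x).ne
  obtain ⟨i, hi⟩ := hN (c₁ ∘ Sym2.map f)
  obtain ⟨π, hπ, hπz⟩ := htrans z i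
  refine ⟨switchAt c₁ π (Fin.last N), hcc₁.switchAt hπ _, i, ?_⟩
  have hcard : a i = a i - 1 + 1 := by have := ha i; omega
  rw [hcard]
  refine HasMonoK.insert_apex hf ((switchAt_comp_map_of_forall_ne hf).symm ▸ hi) fun x => ?_
  rw [switchAt_of_mem (Sym2.mem_mk_right _ _), hc₁ _ (hf x), hπz]
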